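/- Let Φ be the standard normal distribution function and fix t ∈ ℝ. Then, uniformly for x ∈ [1/2, 1], (1 − Φ(u/x + t/(x u))) / (1 − Φ(u/x)) → exp(−t/x²) as u → ∞; that is, sup_{x ∈ [1/2,1]} | (1 − Φ(u/x + t/(xu)))/(1 − Φ(u/x)) − exp(−t/x²) | → 0 as u → ∞. -/

import Mathlib

open MeasureTheory ProbabilityTheory Filter

noncomputable section

/-- The Gumbel distribution function `Λ(x) = exp(-exp(-x))`. -/
def gumbel (x : ℝ) : ℝ := Real.exp (-Real.exp (-x))

/-- Distribution function of a real random variable. -/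
def df {Ω : Type*} [MeasurableSpace Ω] (μ : Measure Ω) (Y : Ω → ℝ) : ℝ → ℝ :=
  fun x => (μ {ω | Y ω ≤ x}).toReal

/-- Survival function of a real random variable. -/
def surv {Ω : Type*} [MeasurableSpace Ω] (μ : Measure Ω) (Y : Ω → ℝ) (u : ℝ) : ℝ :=
  (μ {ω | u < Y ω}).toReal

/-- Generalised inverse `G⁻¹(p) = inf {x : G x ≥ p}`. -/
def genInv (G : ℝ → ℝ) (p : ℝ) : ℝ := sInf {x : ℝ | p ≤ G x}

/-- The standard normal distribution function `Φ`. -/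
def stdNormalCDF (x : ℝ) : ℝ := ((gaussianReal 0 1) (Set.Iic x)).toReal

/-- The distribution of `S` has upper endpoint `1`. -/
def HasUpperEndpointOne {Ω : Type*} [MeasurableSpace Ω] (μ : Measure Ω) (S : Ω → ℝ) : Prop :=
  (∀ᵐ ω ∂μ, S ω ≤ 1) ∧ ∀ s : ℝ, s < 1 → 0 < μ {ω | s < S ω}

/-- The survival function of `S` is regularly varying at `1` with index `γ`. -/
def RegVarAtOne {Ω : Type*} [MeasurableSpace Ω] (μ : Measure Ω) (S : Ω → ℝ) (γ : ℝ) : Prop :=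
  ∀ t : ℝ, 0 < t →
    Tendsto (fun u : ℝ => surv μ S (1 - t / u) / surv μ S (1 - 1 / u)) atTop (nhds (t ^ γ))

/-- Assumption A of Hashorva and Weng, with explicit bounding variables `Sg` (index `γ`),
`St` (index `τ`) and threshold `ν ∈ (0,1)`. -/
def AssumptionA {Ω : Type*} [MeasurableSpace Ω] (μ : Measure Ω)
    (S Sg St : Ω → ℝ) (γ τ ν : ℝ) : Prop :=
  0 ≤ γ ∧ 0 ≤ τ ∧ ν ∈ Set.Ioo (0:ℝ) 1 ∧
  (∀ᵐ ω ∂μ, 0 ≤ S ω) ∧ HasUpperEndpointOne μ S ∧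
  (∀ᵐ ω ∂μ, 0 ≤ Sg ω) ∧ (∀ᵐ ω ∂μ, 0 ≤ St ω) ∧
  RegVarAtOne μ Sg γ ∧ RegVarAtOne μ St τ ∧
  ∀ u ∈ Set.Ioo ν (1:ℝ),
    μ {ω | u < S ω} ≤ μ {ω | u < St ω} ∧ μ {ω | u < Sg ω} ≤ μ {ω | u < S ω}

/-- `X_n, n ≥ 1` is a standard stationary Gaussian sequence with correlation function
`ρ` (`ρ 0 = 1`, `ρ n = E[X_1 X_{n+1}]`): every finite linear combination of the `X_i`,
`i ≥ 1`, is a centered Gaussian with variance given by the covariances `ρ (|i - j|)`. -/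
def IsStdStationaryGaussianSeq {Ω : Type*} [MeasurableSpace Ω] (μ : Measure Ω)
    (X : ℕ → Ω → ℝ) (ρ : ℕ → ℝ) : Prop :=
  (∀ i, Measurable (X i)) ∧ ρ 0 = 1 ∧
  ∀ (m : ℕ) (c : Fin m → ℝ) (k : ℕ),
    Measure.map (fun ω => ∑ i : Fin m, c i * X (k + 1 + (i : ℕ)) ω) μ
      = gaussianReal 0
          (Real.toNNReal (∑ i : Fin m, ∑ j : Fin m,
            c i * c j * ρ (((i : ℕ) : ℤ) - ((j : ℕ) : ℤ)).natAbs))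

/-- `M_n^* = max_{1 ≤ i ≤ n} S_i X_i` (junk value `0` for `n = 0`). -/
def Mstar {Ω : Type*} (S X : ℕ → Ω → ℝ) : ℕ → Ω → ℝ
  | 0 => fun _ => 0
  | 1 => fun ω => S 1 ω * X 1 ω
  | (n + 2) => fun ω => max (Mstar S X (n + 1) ω) (S (n + 2) ω * X (n + 2) ω)

/-- `H ∈ GMDA(w)`: Gumbel max-domain of attraction with positive scaling function `w`. -/
def GMDA (H : ℝ → ℝ) (w : ℝ → ℝ) : Prop :=
  (∀ u, 0 < w u) ∧
  ∀ x : ℝ, 0 ≤ x →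
    Tendsto (fun u : ℝ => (1 - H (u + x / w u)) / (1 - H u)) atTop (nhds (Real.exp (-x)))

/-!
For `z > 0`, integrating `x φ(x)` and `φ(x) (1 + x⁻²)` over `(z, ∞)` gives Mills' inequalities
`z / (z² + 1) φ(z) ≤ 1 - Φ(z) ≤ φ(z) / z`, so the Mills ratio `M = (1 - Φ) / φ` satisfies
`z M(z) → 1`. With `b = u / x` and `c = t / (x u)` one has `b c = t / x²` and
`φ(b + c) = φ(b) e^{-bc - c²/2}`, so the ratio equals `e^{-t/x²} · e^{-c²/2} M(b + c) / M(b)`.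
Uniformly in `x ∈ [1/2, 1]`, `b ≥ u → ∞` and `|c| ≤ 2|t| / u → 0`, so the last two factors tend
to `1`, while `e^{-t/x²} ≤ e^{4|t|}`.
-/

open Real Set Topology

local notation "φ" => gaussianPDFReal 0 1

lemma gaussianPDFReal_zero_one (x : ℝ) : φ x = (√(2 * π))⁻¹ * exp (-x ^ 2 / 2) := by
  simp [gaussianPDFReal]

lemma hasDerivAt_gaussianPDFReal_zero_one (x : ℝ) : HasDerivAt φ (-x * φ x) x := by
  have h : HasDerivAt (fun y : ℝ => -y ^ 2 / 2) (-x) x := by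
    simpa using ((hasDerivAt_pow 2 x).neg.div_const 2).congr_deriv (by ring)
  rw [funext gaussianPDFReal_zero_one]
  exact (h.exp.const_mul _).congr_deriv (by ring)

lemma tendsto_gaussianPDFReal_zero_one_atTop : Tendsto φ atTop (𝓝 0) := by
  have h : Tendsto (fun x : ℝ => -x ^ 2 / 2) atTop atBot :=
    (tendsto_neg_atTop_atBot.comp (tendsto_pow_atTop two_ne_zero)).atBot_div_const two_pos
  simpa [funext gaussianPDFReal_zero_one] using (tendsto_exp_atBot.comp h).const_mul (√(2 * π))⁻¹

lemma gaussianPDFReal_zero_one_add (b c : ℝ) : φ (b + c) = φ b * exp (-(b * c) - c ^ 2 / 2) := by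
  rw [gaussianPDFReal_zero_one, gaussianPDFReal_zero_one, mul_assoc, ← exp_add]
  ring_nf

lemma one_sub_stdNormalCDF_eq_integral (z : ℝ) : 1 - stdNormalCDF z = ∫ x in Ioi z, φ x := by
  rw [stdNormalCDF, ← measureReal_def, ← probReal_compl_eq_one_sub measurableSet_Iic, compl_Iic,
    measureReal_def, gaussianReal_apply_eq_integral 0 one_ne_zero, ENNReal.toReal_ofReal]
  exact setIntegral_nonneg measurableSet_Ioi fun x _ => gaussianPDFReal_nonneg 0 1 x

lemma hasDerivAt_neg_gaussianPDFReal_zero_one_div {x : ℝ} (hx : x ≠ 0) :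
    HasDerivAt (fun s => -(φ s / s)) (φ x * (1 + (x ^ 2)⁻¹)) x := by
  refine (((hasDerivAt_gaussianPDFReal_zero_one x).div (hasDerivAt_id x) hx).neg).congr_deriv ?_
  simp only [id]
  field_simp
  ring

lemma one_sub_stdNormalCDF_le {z : ℝ} (hz : 0 < z) : 1 - stdNormalCDF z ≤ φ z / z := by
  have hnonneg : ∀ x ∈ Ioi z, 0 ≤ x * φ x := fun x hx =>
    mul_nonneg (hz.trans hx).le (gaussianPDFReal_nonneg 0 1 x)
  have hderiv : ∀ x ∈ Ici z, HasDerivAt (fun s => -φ s) (x * φ x) x :=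
    fun x _ => (hasDerivAt_gaussianPDFReal_zero_one x).neg.congr_deriv (by ring)
  have hlim : Tendsto (fun s => -φ s) atTop (𝓝 0) := by
    simpa using tendsto_gaussianPDFReal_zero_one_atTop.neg
  have hint := integral_Ioi_of_hasDerivAt_of_nonneg' hderiv hnonneg hlim
  rw [le_div_iff₀ hz, one_sub_stdNormalCDF_eq_integral, ← integral_mul_const]
  calc ∫ x in Ioi z, φ x * z ≤ ∫ x in Ioi z, x * φ x := by
        refine setIntegral_mono_on ((integrable_gaussianPDFReal 0 1).integrableOn.mul_const z)
          (integrableOn_Ioi_deriv_of_nonneg' hderiv hnonneg hlim) measurableSet_Ioi fun x hx => ?_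
        rw [mul_comm]
        exact mul_le_mul_of_nonneg_right (le_of_lt hx) (gaussianPDFReal_nonneg 0 1 x)
    _ = φ z := by simpa using hint

lemma le_one_sub_stdNormalCDF {z : ℝ} (hz : 0 < z) :
    z / (z ^ 2 + 1) * φ z ≤ 1 - stdNormalCDF z := by
  have hpos : ∀ x ∈ Ioi z, 0 ≤ φ x * (1 + (x ^ 2)⁻¹) := fun x _ =>
    mul_nonneg (gaussianPDFReal_nonneg 0 1 x) (by positivity)
  have hderiv : ∀ x ∈ Ici z, HasDerivAt (fun s => -(φ s / s)) (φ x * (1 + (x ^ 2)⁻¹)) x :=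
    fun x hx => hasDerivAt_neg_gaussianPDFReal_zero_one_div (hz.trans_le hx).ne'
  have hlim : Tendsto (fun s => -(φ s / s)) atTop (𝓝 0) := by
    simpa using (tendsto_gaussianPDFReal_zero_one_atTop.div_atTop tendsto_id).neg
  have hint := integral_Ioi_of_hasDerivAt_of_nonneg' hderiv hpos hlim
  have key : φ z / z ≤ (1 + (z ^ 2)⁻¹) * (1 - stdNormalCDF z) := by
    rw [one_sub_stdNormalCDF_eq_integral, ← integral_const_mul]
    calc φ z / z = ∫ x in Ioi z, φ x * (1 + (x ^ 2)⁻¹) := by simpa using hint.symm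
      _ ≤ ∫ x in Ioi z, (1 + (z ^ 2)⁻¹) * φ x := by
        refine setIntegral_mono_on (integrableOn_Ioi_deriv_of_nonneg' hderiv hpos hlim)
          ((integrable_gaussianPDFReal 0 1).integrableOn.const_mul _) measurableSet_Ioi
          fun x hx => ?_
        rw [mul_comm]
        refine mul_le_mul_of_nonneg_right ?_ (gaussianPDFReal_nonneg 0 1 x)
        gcongr
        exact hx.le
  calc z / (z ^ 2 + 1) * φ z = z ^ 2 / (z ^ 2 + 1) * (φ z / z) := by field_simp
    _ ≤ z ^ 2 / (z ^ 2 + 1) * ((1 + (z ^ 2)⁻¹) * (1 - stdNormalCDF z)) := by gcongr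
    _ = 1 - stdNormalCDF z := by field_simp

def millsRatio (z : ℝ) : ℝ := (1 - stdNormalCDF z) / φ z

lemma one_sub_stdNormalCDF_eq_mul_millsRatio (z : ℝ) :
    1 - stdNormalCDF z = φ z * millsRatio z :=
  (mul_div_cancel₀ _ (gaussianPDFReal_pos 0 1 z one_ne_zero).ne').symm

lemma tendsto_mul_millsRatio_atTop : Tendsto (fun z => z * millsRatio z) atTop (𝓝 1) := by
  have hlow : Tendsto (fun z : ℝ => 1 - (z ^ 2 + 1)⁻¹) atTop (𝓝 1) := by
    simpa using tendsto_const_nhds.sub (tendsto_inv_atTop_zero.comp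
      (tendsto_atTop_add_const_right _ 1 (tendsto_pow_atTop (α := ℝ) two_ne_zero)))
  refine tendsto_of_tendsto_of_tendsto_of_le_of_le' hlow tendsto_const_nhds ?_ ?_ <;>
    filter_upwards [eventually_gt_atTop 0] with z hz <;>
    have hφ := gaussianPDFReal_pos 0 1 z one_ne_zero <;>
    rw [millsRatio, mul_div_assoc']
  · have h := le_one_sub_stdNormalCDF hz
    rw [le_div_iff₀ hφ]
    calc (1 - (z ^ 2 + 1)⁻¹) * φ z = z * (z / (z ^ 2 + 1) * φ z) := by field_simp; ring
      _ ≤ z * (1 - stdNormalCDF z) := by gcongr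
  · have h := one_sub_stdNormalCDF_le hz
    rw [div_le_iff₀ hφ, one_mul]
    rwa [le_div_iff₀ hz, mul_comm] at h

lemma millsRatio_pos {z : ℝ} (hz : 0 < z) : 0 < millsRatio z := by
  have hφ := gaussianPDFReal_pos 0 1 z one_ne_zero
  exact div_pos ((by positivity : 0 < z / (z ^ 2 + 1) * φ z).trans_le
    (le_one_sub_stdNormalCDF hz)) hφ

theorem tendsto_one_sub_stdNormalCDF_add_div_mul_exp {α : Type*} {l : Filter α} {b c : α → ℝ}
    (hb : Tendsto b l atTop) (hc : Tendsto c l (𝓝 0)) :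
    Tendsto (fun i => (1 - stdNormalCDF (b i + c i)) / (1 - stdNormalCDF (b i)) *
      exp (b i * c i)) l (𝓝 1) := by
  have ha : Tendsto (fun i => b i + c i) l atTop := hb.atTop_add hc
  have hlim : Tendsto (fun i => exp (-c i ^ 2 / 2) *
      ((b i + c i) * millsRatio (b i + c i) / (b i * millsRatio (b i))) *
      (1 - c i * (b i + c i)⁻¹)) l (𝓝 1) := by
    have hexp : Tendsto (fun i => exp (-c i ^ 2 / 2)) l (𝓝 1) := by
      simpa using ((hc.pow 2).neg.div_const 2).rexp
    have hshift := tendsto_const_nhds (x := (1 : ℝ)).sub (hc.mul (tendsto_inv_atTop_zero.comp ha))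
    simpa using (hexp.mul ((tendsto_mul_millsRatio_atTop.comp ha).div
      (tendsto_mul_millsRatio_atTop.comp hb) one_ne_zero)).mul hshift
  refine hlim.congr' ?_
  filter_upwards [hb.eventually_gt_atTop 0, ha.eventually_gt_atTop 0] with i hbi hai
  have hφ := gaussianPDFReal_pos 0 1 (b i) one_ne_zero
  have hM := millsRatio_pos hbi
  have hexp : exp (-(b i * c i) - c i ^ 2 / 2) * exp (b i * c i) = exp (-c i ^ 2 / 2) := by
    rw [← exp_add]; ring_nf
  rw [one_sub_stdNormalCDF_eq_mul_millsRatio, one_sub_stdNormalCDF_eq_mul_millsRatio,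
    gaussianPDFReal_zero_one_add, ← hexp]
  field_simp
  ring

lemma tendsto_iSup_abs_of_tendsto_prod_principal {ι α : Type*} {l : Filter ι} {s : Set α}
    [Nonempty s] {F : ι → α → ℝ} (h : Tendsto (fun p : ι × α => F p.1 p.2) (l ×ˢ 𝓟 s) (𝓝 0)) :
    Tendsto (fun i => ⨆ x : s, |F i x|) l (𝓝 0) := by
  rw [Metric.tendsto_nhds] at h ⊢
  intro ε hε
  filter_upwards [eventually_prod_principal_iff.1 (h (ε / 2) (half_pos hε))] with i hi
  have hsup : ⨆ x : s, |F i x| ≤ ε / 2 := ciSup_le fun x => by simpa using (hi x x.2).le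
  rw [dist_zero_right, Real.norm_eq_abs, abs_of_nonneg (Real.iSup_nonneg fun _ => abs_nonneg _)]
  linarith

lemma abs_div_mul_le_of_le {a x u : ℝ} (t : ℝ) (ha : 0 < a) (hax : a ≤ x) (hu : 0 < u) :
    |t / (x * u)| ≤ |t| / (a * u) := by
  rw [abs_div, abs_of_pos (by nlinarith : 0 < x * u)]
  gcongr

lemma neg_div_sq_le_of_le {a x : ℝ} (t : ℝ) (ha : 0 < a) (hax : a ≤ x) :
    -(t / x ^ 2) ≤ |t| / a ^ 2 :=
  (neg_le_abs _).trans (by rw [abs_div, abs_sq]; gcongr)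

lemma abs_sub_exp_neg (r s : ℝ) : |r - exp (-s)| = exp (-s) * |r * exp s - 1| := by
  rw [← abs_of_pos (exp_pos (-s)), ← abs_mul, abs_of_pos (exp_pos (-s)), mul_sub, mul_one,
    mul_left_comm, ← exp_add, neg_add_cancel, exp_zero, mul_one]

/-- uniform convergence on `[1/2, 1]` of the scaled Gaussian tail ratio. -/
theorem gaussian_tail_ratio_uniform (t : ℝ) :
    Tendsto (fun u : ℝ =>
        ⨆ x : Set.Icc (1/2 : ℝ) 1,
          |(1 - stdNormalCDF (u / (x : ℝ) + t / ((x : ℝ) * u))) /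
              (1 - stdNormalCDF (u / (x : ℝ))) -
            Real.exp (-t / (x : ℝ) ^ 2)|)
      atTop (nhds 0) := by
  have : Nonempty (Icc (1/2 : ℝ) 1) := ⟨⟨1, by norm_num⟩⟩
  refine tendsto_iSup_abs_of_tendsto_prod_principal
    (F := fun u x => (1 - stdNormalCDF (u / x + t / (x * u))) / (1 - stdNormalCDF (u / x)) -
      exp (-t / x ^ 2)) ?_
  have hl : ∀ᶠ p in (atTop : Filter ℝ) ×ˢ 𝓟 (Icc (1/2 : ℝ) 1), 0 < p.1 ∧ p.2 ∈ Icc (1/2 : ℝ) 1 :=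
    prod_mem_prod (Ioi_mem_atTop 0) (mem_principal_self _)
  have hb : Tendsto (fun p : ℝ × ℝ => p.1 / p.2) (atTop ×ˢ 𝓟 (Icc (1/2 : ℝ) 1)) atTop :=
    tendsto_atTop_mono' _ (hl.mono fun p ⟨hu, hx⟩ => le_div_self hu.le (by linarith [hx.1]) hx.2)
      tendsto_fst
  have hc : Tendsto (fun p : ℝ × ℝ => t / (p.2 * p.1)) (atTop ×ˢ 𝓟 (Icc (1/2 : ℝ) 1)) (𝓝 0) :=
    squeeze_zero_norm' (hl.mono fun p ⟨hu, hx⟩ => abs_div_mul_le_of_le t one_half_pos hx.1 hu)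
      (tendsto_const_nhds.div_atTop (tendsto_fst.const_mul_atTop one_half_pos))
  have key := ((tendsto_one_sub_stdNormalCDF_add_div_mul_exp hb hc).sub_const 1).abs.const_mul
    (exp (|t| / (1 / 2) ^ 2))
  rw [sub_self, abs_zero, mul_zero] at key
  refine squeeze_zero_norm' (hl.mono fun p ⟨hu, hx⟩ => ?_) key
  have hbc : p.1 / p.2 * (t / (p.2 * p.1)) = t / p.2 ^ 2 := by
    have : p.2 ≠ 0 := by linarith [hx.1]
    field_simp
  rw [Real.norm_eq_abs, hbc, neg_div, abs_sub_exp_neg]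
  gcongr
  exact neg_div_sq_le_of_le t one_half_pos hx.1
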